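/- Let F : ℝⁿ → ℝᵐ be continuously differentiable and let x ∈ ℝⁿ be a point that is not Pareto critical. Then for any σ ∈ (0,1) there exists β₀ ∈ (0,1] such that F_i(x + β·d(x)) − F_i(x) ≤ σβθ(x) for all β ∈ [0, β₀] and all i ∈ {1,…,m}. -/

import Mathlib

open scoped RealInnerProductSpace

/-- `φ_g(d) = max_{1 ≤ i ≤ m} ⟨g_i, d⟩ + ‖d‖²/2`. -/
noncomputable def phi {n m : ℕ} (g : Fin m → EuclideanSpace ℝ (Fin n))
    (d : EuclideanSpace ℝ (Fin n)) : ℝ :=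
  (⨆ i, ⟪g i, d⟫) + ‖d‖ ^ 2 / 2

/-- `x` is Pareto critical: no direction `d` with `⟨∇F_i(x), d⟩ < 0` for all `i`. -/
def ParetoCritical {n m : ℕ} (F : Fin m → EuclideanSpace ℝ (Fin n) → ℝ)
    (x : EuclideanSpace ℝ (Fin n)) : Prop :=
  ¬ ∃ d : EuclideanSpace ℝ (Fin n), ∀ i, ⟪gradient (F i) x, d⟫ < 0

/-- `θ(x) = min_d [max_i ⟨∇F_i(x), d⟩ + ‖d‖²/2]`. -/
noncomputable def theta {n m : ℕ} (F : Fin m → EuclideanSpace ℝ (Fin n) → ℝ)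
    (x : EuclideanSpace ℝ (Fin n)) : ℝ :=
  ⨅ d : EuclideanSpace ℝ (Fin n), phi (fun i => gradient (F i) x) d

/-!
At a point that is not Pareto critical, a common descent direction, shortened enough, makes
`φ` negative, so `θ(x) < 0`. Since `⟨∇F_i(x), d(x)⟩ ≤ φ(d(x)) = θ(x) < σ θ(x)`, each `F_i` has
slope strictly below `σ θ(x)` along the ray `x + β d(x)` at `β = 0`, so Armijo's inequality holds
for all small `β ≥ 0`; there are finitely many `i`, so one `β₀` serves them all.
-/

open Filter Topology

section LineSearch

variable {E : Type*} [NormedAddCommGroup E] [InnerProductSpace ℝ E] [CompleteSpace E]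

theorem DifferentiableAt.hasLineDerivAt_inner_gradient {f : E → ℝ} {x : E}
    (hf : DifferentiableAt ℝ f x) (d : E) : HasLineDerivAt ℝ f ⟪gradient f x, d⟫ x d := by
  simpa using hf.hasGradientAt.hasFDerivAt.hasLineDerivAt d

theorem HasDerivAt.eventually_sub_le_mul_sub {φ : ℝ → ℝ} {φ' c a : ℝ} (hφ : HasDerivAt φ φ' a)
    (hc : φ' < c) : ∀ᶠ t in 𝓝[≥] a, φ t - φ a ≤ c * (t - a) := by
  have hsmall := hφ.isLittleO.def (sub_pos.2 hc)
  filter_upwards [nhdsWithin_le_nhds hsmall, self_mem_nhdsWithin] with t ht hta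
  have hta : 0 ≤ t - a := sub_nonneg.2 hta
  rw [Real.norm_eq_abs, Real.norm_eq_abs, abs_of_nonneg hta, smul_eq_mul] at ht
  nlinarith [le_abs_self (φ t - φ a - (t - a) * φ')]

theorem DifferentiableAt.eventually_armijo {f : E → ℝ} {x d : E} {c : ℝ}
    (hf : DifferentiableAt ℝ f x) (hc : ⟪gradient f x, d⟫ < c) :
    ∀ᶠ β in 𝓝[≥] 0, f (x + β • d) - f x ≤ c * β := by
  simpa using (hf.hasLineDerivAt_inner_gradient d).eventually_sub_le_mul_sub hc

end LineSearch

section SteepestDescent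

variable {n m : ℕ}

theorem inner_le_phi (g : Fin m → EuclideanSpace ℝ (Fin n)) (d : EuclideanSpace ℝ (Fin n))
    (i : Fin m) : ⟪g i, d⟫ ≤ phi g d := by
  have hle_sup := le_ciSup (Set.finite_range fun j => ⟪g j, d⟫).bddAbove i
  unfold phi
  linarith [sq_nonneg ‖d‖]

theorem phi_smul (g : Fin m → EuclideanSpace ℝ (Fin n)) {t : ℝ} (ht : 0 ≤ t)
    (d : EuclideanSpace ℝ (Fin n)) :
    phi g (t • d) = t * (⨆ i, ⟪g i, d⟫) + t ^ 2 * (‖d‖ ^ 2 / 2) := by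
  simp only [phi, real_inner_smul_right, Real.mul_iSup_of_nonneg ht, norm_smul,
    Real.norm_of_nonneg ht]
  ring

theorem exists_phi_neg [Nonempty (Fin m)] {g : Fin m → EuclideanSpace ℝ (Fin n)}
    {d : EuclideanSpace ℝ (Fin n)} (hd : ∀ i, ⟪g i, d⟫ < 0) : ∃ d', phi g d' < 0 := by
  set M := ⨆ i, ⟪g i, d⟫
  have hM : M < 0 := by
    obtain ⟨i, hi⟩ := exists_eq_ciSup_of_finite (f := fun i => ⟪g i, d⟫)
    simpa only [M, ← hi] using hd i
  set t := -M / (‖d‖ ^ 2 + 1)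
  have ht : 0 < t := div_pos (neg_pos.2 hM) (by positivity)
  have htd : t * ‖d‖ ^ 2 ≤ -M := by
    have : t * (‖d‖ ^ 2 + 1) = -M := div_mul_cancel₀ _ (by positivity)
    nlinarith
  refine ⟨t • d, ?_⟩
  rw [phi_smul g ht.le]
  nlinarith

theorem theta_eq_phi_of_forall_le {F : Fin m → EuclideanSpace ℝ (Fin n) → ℝ}
    {x dx : EuclideanSpace ℝ (Fin n)}
    (hdx : ∀ d', phi (fun i => gradient (F i) x) dx ≤ phi (fun i => gradient (F i) x) d') :
    theta F x = phi (fun i => gradient (F i) x) dx :=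
  le_antisymm (ciInf_le ⟨_, Set.forall_mem_range.2 hdx⟩ dx) (le_ciInf hdx)

end SteepestDescent

theorem stmt_8_general {n m : ℕ} (F : Fin m → EuclideanSpace ℝ (Fin n) → ℝ)
    (hF : ∀ i, ContDiff ℝ 1 (F i)) (x : EuclideanSpace ℝ (Fin n))
    (hx : ¬ ParetoCritical F x) (σ : ℝ) (hσ : σ ∈ Set.Ioo (0 : ℝ) 1)
    (dx : EuclideanSpace ℝ (Fin n))
    (hdx : ∀ d' : EuclideanSpace ℝ (Fin n),
      phi (fun i => gradient (F i) x) dx ≤ phi (fun i => gradient (F i) x) d') :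
    ∃ β₀ ∈ Set.Ioc (0 : ℝ) 1, ∀ β ∈ Set.Icc (0 : ℝ) β₀, ∀ i,
      F i (x + β • dx) - F i x ≤ σ * β * theta F x := by
  obtain ⟨d, hd⟩ := not_not.1 hx
  have hθ := theta_eq_phi_of_forall_le hdx
  have hslope (i : Fin m) : ⟪gradient (F i) x, dx⟫ < σ * theta F x := by
    have : Nonempty (Fin m) := ⟨i⟩
    obtain ⟨d', hd'⟩ := exists_phi_neg hd
    have hθneg : theta F x < 0 := hθ ▸ (hdx d').trans_lt hd'
    have hle := inner_le_phi (fun j => gradient (F j) x) dx i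
    nlinarith [hσ.2]
  have hev : ∀ᶠ β in 𝓝[≥] (0 : ℝ), ∀ i, F i (x + β • dx) - F i x ≤ σ * theta F x * β :=
    eventually_all.2 fun i =>
      ((hF i).differentiable one_ne_zero x).eventually_armijo (hslope i)
  obtain ⟨u, hu, hsub⟩ := mem_nhdsGE_iff_exists_Icc_subset.1 hev
  refine ⟨min u 1, ⟨lt_min hu one_pos, min_le_right _ _⟩, fun β hβ i => ?_⟩
  rw [mul_right_comm]
  exact hsub ⟨hβ.1, hβ.2.trans (min_le_left _ _)⟩ i

theorem stmt_8 {n m : ℕ} (hm : 0 < m) (F : Fin m → EuclideanSpace ℝ (Fin n) → ℝ)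
    (hF : ∀ i, ContDiff ℝ 1 (F i)) (x : EuclideanSpace ℝ (Fin n))
    (hx : ¬ ParetoCritical F x) (σ : ℝ) (hσ : σ ∈ Set.Ioo (0 : ℝ) 1)
    (dx : EuclideanSpace ℝ (Fin n))
    (hdx : ∀ d' : EuclideanSpace ℝ (Fin n),
      phi (fun i => gradient (F i) x) dx ≤ phi (fun i => gradient (F i) x) d') :
    ∃ β₀ ∈ Set.Ioc (0 : ℝ) 1, ∀ β ∈ Set.Icc (0 : ℝ) β₀, ∀ i,
      F i (x + β • dx) - F i x ≤ σ * β * theta F x :=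
  stmt_8_general F hF x hx σ hσ dx hdx
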